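/- In a balanced strictly binary tree with u leaves, the number of distinct ancestors of any r leaves all chosen from within a contiguous block of ℓ consecutive leaves is O(log u + r·log₂(ℓ/r)). -/

import Mathlib

/-- A strictly binary tree with natural-number-labeled leaves (a wavelet tree shape). -/
inductive BTree where
  | leaf : ℕ → BTree
  | node : BTree → BTree → BTree

namespace BTree

/-- The leaves of the tree, in left-to-right order. -/
def leaves : BTree → List ℕ
  | leaf a => [a]
  | node l r => l.leaves ++ r.leaves

/-- Number of leaves. -/
def numLeaves (t : BTree) : ℕ := t.leaves.length

/-- Balanced: at every node, the numbers of leaves of the two subtrees differ by at most 1. -/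
def balanced : BTree → Prop
  | leaf _ => True
  | node l r => ((l.numLeaves : ℤ) - (r.numLeaves : ℤ) ≤ 1) ∧
      ((r.numLeaves : ℤ) - (l.numLeaves : ℤ) ≤ 1) ∧ l.balanced ∧ r.balanced

/-- A (root-to-node) path, given as a list of booleans (`false` = go left). -/
def validPath : BTree → List Bool → Prop
  | _, [] => True
  | leaf _, _ :: _ => False
  | node l r, b :: p => if b then r.validPath p else l.validPath p

/-- The subtree reached by following a path. -/
def subtreeAt : BTree → List Bool → Option BTree
  | t, [] => some t
  | leaf _, _ :: _ => none
  | node l r, b :: p => if b then r.subtreeAt p else l.subtreeAt p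

/-- The index (0-based, in left-to-right leaf order) of the first leaf below the node at a path. -/
def pathOffset : BTree → List Bool → ℕ
  | _, [] => 0
  | leaf _, _ :: _ => 0
  | node l r, b :: p => if b then l.numLeaves + r.pathOffset p else l.pathOffset p

/-- Number of leaves below the node at a path (0 if the path is invalid). -/
def pathLeaves (t : BTree) (p : List Bool) : ℕ := ((t.subtreeAt p).map numLeaves).getD 0

/-- The set of (positions of) leaves descending from the node at a path. -/
def leafInterval (t : BTree) (p : List Bool) : Finset ℕ :=
  Finset.Ico (t.pathOffset p) (t.pathOffset p + t.pathLeaves p)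

end BTree

/-!
Group the ancestors by depth. At depth `d` there are at most `r` of them, one per chosen leaf.
In a balanced tree with `u` leaves and `D = ⌈log₂ u⌉`, a node at depth `d < D` has between
`2 ^ (D - 1 - d)` and `2 ^ (D - d)` leaves below it, and the nodes of one depth own disjoint
intervals of leaves, so at most `ℓ / 2 ^ (D - 1 - d) + 3` of them meet the window. With
`M = log₂ (ℓ / r)`, the second bound summed over the depths above `D - M` is a geometric series
of total `O(r + D)`, and each of the remaining `M + 1` depths contributes at most `r`.
-/

lemma card_le_of_separated {α : Type*} (O : Finset α) (f : α → ℕ) {lo hi s : ℕ} (hs : 0 < s)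
    (hmem : ∀ x ∈ O, lo ≤ f x ∧ f x < hi)
    (hsep : ∀ x ∈ O, ∀ y ∈ O, x ≠ y → f x + s ≤ f y ∨ f y + s ≤ f x) :
    O.card ≤ (hi - lo) / s + 1 := by
  have hblock : ∀ x ∈ O, ∀ y ∈ O, f x + s ≤ f y → (f x - lo) / s + 1 ≤ (f y - lo) / s :=
    fun x hx y hy hxy ↦ by
      rw [← Nat.add_div_right _ hs]
      exact Nat.div_le_div_right (by have := hmem x hx; omega)
  simpa using Finset.card_le_card_of_injOn (t := Finset.range ((hi - lo) / s + 1))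
    (fun x ↦ (f x - lo) / s)
    (fun x hx ↦ by
      simpa [Nat.lt_succ_iff] using Nat.div_le_div_right (c := s) (by have := hmem x hx; omega))
    (fun x hx y hy hxy ↦ by
      by_contra hne
      simp only at hxy
      rcases hsep x hx y hy hne with h | h
      · have := hblock x hx y hy h; omega
      · have := hblock y hy x hx h; omega)

open Finset in
lemma sum_le_of_level_bounds (N : ℕ → ℕ) {ℓ r D : ℕ} (hr : 0 < r) (hNr : ∀ d, N d ≤ r)
    (hNℓ : ∀ d < D, N d ≤ ℓ / 2 ^ (D - 1 - d) + 3) :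
    ∑ d ∈ range (D + 1), N d ≤ 6 * (D + r * max 1 (Nat.log 2 (ℓ / r))) := by
  set M := max 1 (Nat.log 2 (ℓ / r))
  have hM : 1 ≤ M := le_max_left _ _
  have hsum_r : ∀ (n : ℕ) (f : ℕ → ℕ), ∑ d ∈ range n, N (f d) ≤ n * r := fun n f ↦ by
    simpa using sum_le_sum fun d (_ : d ∈ range n) ↦ hNr (f d)
  rcases le_or_gt D (M + 1) with hD | hD
  · have := hsum_r (D + 1) id
    simp only [id] at this
    nlinarith
  set T := ℓ / 2 ^ M
  have hT : T < 2 * r := by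
    have hlog : ℓ / r < 2 ^ (M + 1) :=
      (Nat.lt_pow_succ_log_self one_lt_two _).trans_le (Nat.pow_le_pow_right two_pos (by omega))
    rw [Nat.div_lt_iff_lt_mul (by positivity)]
    rw [Nat.div_lt_iff_lt_mul hr, pow_succ] at hlog
    linarith
  have htop : ∑ d ∈ range (D - M), N d ≤ 2 * T + 3 * D := by
    calc ∑ d ∈ range (D - M), N d
        ≤ ∑ d ∈ range (D - M), (T / 2 ^ (D - M - 1 - d) + 3) :=
          sum_le_sum fun d hd ↦ by
            have hd : d < D - M := mem_range.mp hd
            have := hNℓ d (by omega)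
            rwa [Nat.div_div_eq_div_mul, ← pow_add, show M + (D - M - 1 - d) = D - 1 - d by omega]
      _ = ∑ j ∈ range (D - M), T / 2 ^ j + 3 * (D - M) := by
          rw [sum_add_distrib, sum_range_reflect (fun j ↦ T / 2 ^ j)]; simp [mul_comm]
      _ ≤ 2 * T + 3 * D := by
          have := Nat.geom_sum_le le_rfl T (D - M)
          simp only [Nat.add_one_sub_one, Nat.div_one] at this
          omega
  have hbot := hsum_r (M + 1) (D - M + ·)
  rw [show D + 1 = D - M + (M + 1) by omega, sum_range_add]
  nlinarith

namespace BTree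

@[simp] lemma numLeaves_leaf (x : ℕ) : (leaf x).numLeaves = 1 := rfl

@[simp] lemma numLeaves_node (l r : BTree) :
    (node l r).numLeaves = l.numLeaves + r.numLeaves := by
  simp [numLeaves, leaves]

lemma numLeaves_pos (t : BTree) : 0 < t.numLeaves := by
  induction t with
  | leaf x => simp
  | node l r _ _ => simp only [numLeaves_node]; omega

@[simp] lemma subtreeAt_nil (t : BTree) : t.subtreeAt [] = some t := by cases t <;> rfl

@[simp] lemma subtreeAt_leaf_cons (x : ℕ) (b : Bool) (p : List Bool) :
    (leaf x).subtreeAt (b :: p) = none := rfl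

@[simp] lemma subtreeAt_node_false (l r : BTree) (p : List Bool) :
    (node l r).subtreeAt (false :: p) = l.subtreeAt p := rfl

@[simp] lemma subtreeAt_node_true (l r : BTree) (p : List Bool) :
    (node l r).subtreeAt (true :: p) = r.subtreeAt p := rfl

@[simp] lemma pathOffset_nil (t : BTree) : t.pathOffset [] = 0 := by cases t <;> rfl

@[simp] lemma pathOffset_node_false (l r : BTree) (p : List Bool) :
    (node l r).pathOffset (false :: p) = l.pathOffset p := rfl

@[simp] lemma pathOffset_node_true (l r : BTree) (p : List Bool) :
    (node l r).pathOffset (true :: p) = l.numLeaves + r.pathOffset p := rfl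

lemma subtreeAt_append (t : BTree) (q q' : List Bool) :
    t.subtreeAt (q ++ q') = (t.subtreeAt q).bind (·.subtreeAt q') := by
  induction q generalizing t with
  | nil => simp
  | cons b p ih => cases t <;> cases b <;> simp [ih]

lemma pathOffset_append {t s : BTree} {q : List Bool} (h : t.subtreeAt q = some s)
    (q' : List Bool) : t.pathOffset (q ++ q') = t.pathOffset q + s.pathOffset q' := by
  induction q generalizing t with
  | nil => simp_all
  | cons b p ih =>
    cases t with
    | leaf x => simp at h
    | node l r => cases b <;> simp [ih h, add_assoc]

lemma pathOffset_add_numLeaves_le {t s : BTree} {q : List Bool}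
    (h : t.subtreeAt q = some s) : t.pathOffset q + s.numLeaves ≤ t.numLeaves := by
  induction q generalizing t with
  | nil => simp_all
  | cons b p ih =>
    cases t with
    | leaf x => simp at h
    | node l r =>
      cases b <;> simp only [subtreeAt_node_false, subtreeAt_node_true] at h <;>
        simp only [pathOffset_node_false, pathOffset_node_true, numLeaves_node] <;>
        linarith [ih h]

lemma pathOffset_separated {t s₁ s₂ : BTree} {q₁ q₂ : List Bool} (hlen : q₁.length = q₂.length)
    (hne : q₁ ≠ q₂) (h₁ : t.subtreeAt q₁ = some s₁) (h₂ : t.subtreeAt q₂ = some s₂) :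
    t.pathOffset q₁ + s₁.numLeaves ≤ t.pathOffset q₂ ∨
      t.pathOffset q₂ + s₂.numLeaves ≤ t.pathOffset q₁ := by
  induction q₁ generalizing t q₂ with
  | nil => cases q₂ <;> simp_all
  | cons b₁ p₁ ih =>
    cases q₂ with
    | nil => simp at hlen
    | cons b₂ p₂ =>
      cases t with
      | leaf x => simp at h₁
      | node l r =>
        simp only [List.length_cons, Nat.add_right_cancel_iff, ne_eq, List.cons.injEq,
          not_and] at hlen hne
        cases b₁ <;> cases b₂ <;>
          simp only [subtreeAt_node_false, subtreeAt_node_true] at h₁ h₂ <;>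
          simp only [pathOffset_node_false, pathOffset_node_true]
        · exact ih hlen (hne rfl) h₁ h₂
        · have := pathOffset_add_numLeaves_le h₁; omega
        · have := pathOffset_add_numLeaves_le h₂; omega
        · have := ih hlen (hne rfl) h₁ h₂; omega

lemma exists_subtreeAt_of_prefix {t : BTree} {q p : List Bool} {x : ℕ} (hqp : q <+: p)
    (hp : t.subtreeAt p = some (leaf x)) : ∃ s, t.subtreeAt q = some s ∧
      t.pathOffset q ≤ t.pathOffset p ∧ t.pathOffset p < t.pathOffset q + s.numLeaves := by
  obtain ⟨q', rfl⟩ := hqp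
  rw [subtreeAt_append] at hp
  obtain ⟨s, hq, hs⟩ := Option.bind_eq_some_iff.mp hp
  have := pathOffset_add_numLeaves_le hs
  rw [pathOffset_append hq]
  exact ⟨s, hq, by simp only [numLeaves_leaf] at this; omega⟩

lemma balanced.abs_numLeaves_sub_lt {t s : BTree} (ht : t.balanced) {q : List Bool}
    (h : t.subtreeAt q = some s) :
    |(t.numLeaves : ℤ) - 2 ^ q.length * s.numLeaves| < 2 ^ q.length := by
  induction q generalizing t with
  | nil => simp_all
  | cons b p ih =>
    cases t with
    | leaf x => simp at h
    | node l r =>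
      obtain ⟨hlr, hrl, hl, hr⟩ := ht
      rw [abs_lt]
      push_cast [numLeaves_node, List.length_cons, pow_succ]
      cases b <;> simp only [subtreeAt_node_false, subtreeAt_node_true] at h <;>
        have := abs_lt.mp (ih (by assumption) h) <;> constructor <;> linarith

lemma balanced.length_le_clog {t : BTree} (ht : t.balanced) {p : List Bool} {x : ℕ}
    (hp : t.subtreeAt p = some (leaf x)) : p.length ≤ Nat.clog 2 t.numLeaves := by
  rcases List.eq_nil_or_concat p with rfl | ⟨q, b, rfl⟩
  · simp
  rw [List.concat_eq_append, subtreeAt_append] at hp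
  obtain ⟨s, hq, hs⟩ := Option.bind_eq_some_iff.mp hp
  cases s with
  | leaf y => cases b <;> simp at hs
  | node l r =>
    have hsize := abs_lt.mp (ht.abs_numLeaves_sub_lt hq)
    have hnode : (2 : ℤ) ≤ (node l r).numLeaves := by
      simp only [numLeaves_node]; push_cast; linarith [l.numLeaves_pos, r.numLeaves_pos]
    have : 2 ^ q.length < t.numLeaves := by
      exact_mod_cast (by nlinarith : (2 : ℤ) ^ q.length < t.numLeaves)
    simpa using (Nat.lt_clog_iff_pow_lt one_lt_two).mpr this

lemma balanced.numLeaves_subtreeAt_mem_Icc {t s : BTree} (ht : t.balanced) {q : List Bool}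
    (h : t.subtreeAt q = some s) (hq : q.length < Nat.clog 2 t.numLeaves) :
    s.numLeaves ∈ Set.Icc (2 ^ (Nat.clog 2 t.numLeaves - 1 - q.length))
      (2 * 2 ^ (Nat.clog 2 t.numLeaves - 1 - q.length)) := by
  set D := Nat.clog 2 t.numLeaves
  set m := 2 ^ (D - 1 - q.length)
  have hsize := abs_lt.mp (ht.abs_numLeaves_sub_lt h)
  have hpow : 2 ^ (D - 1) = m * 2 ^ q.length := by rw [← pow_add]; congr 1; omega
  have hlow : m * 2 ^ q.length < t.numLeaves :=
    hpow ▸ (Nat.lt_clog_iff_pow_lt one_lt_two).mp (by omega)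
  have hup : t.numLeaves ≤ 2 * (m * 2 ^ q.length) := by
    rw [← hpow, ← pow_succ', Nat.sub_add_cancel (by omega : 1 ≤ D)]
    exact Nat.le_pow_clog one_lt_two _
  have hw : (0 : ℤ) < 2 ^ q.length := by positivity
  zify at hlow hup ⊢
  constructor
  · nlinarith
  · nlinarith

def ancestors (P : Finset (List Bool)) : Finset (List Bool) := P.biUnion fun p ↦ p.inits.toFinset

lemma mem_ancestors {P : Finset (List Bool)} {q : List Bool} :
    q ∈ ancestors P ↔ ∃ p ∈ P, q <+: p := by
  simp [ancestors]

lemma card_ancestors_depth_le_card (P : Finset (List Bool)) (d : ℕ) :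
    ((ancestors P).filter (·.length = d)).card ≤ P.card := by
  refine (Finset.card_le_card fun q hq ↦ ?_).trans (Finset.card_image_le (f := List.take d))
  obtain ⟨hanc, rfl⟩ := Finset.mem_filter.mp hq
  obtain ⟨p, hp, hqp⟩ := mem_ancestors.mp hanc
  exact Finset.mem_image.mpr ⟨p, hp, (List.prefix_iff_eq_take.mp hqp).symm⟩

lemma card_ancestors_depth_le_of_window {t : BTree} {P : Finset (List Bool)} {a ℓ d m : ℕ}
    (hm : 0 < m) (hleaf : ∀ p ∈ P, ∃ x, t.subtreeAt p = some (leaf x))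
    (hwin : ∀ p ∈ P, a ≤ t.pathOffset p ∧ t.pathOffset p < a + ℓ)
    (hsize : ∀ q s, q.length = d → t.subtreeAt q = some s →
      m ≤ s.numLeaves ∧ s.numLeaves ≤ 2 * m) :
    ((ancestors P).filter (·.length = d)).card ≤ ℓ / m + 3 := by
  have hnode : ∀ q ∈ (ancestors P).filter (·.length = d), ∃ s, t.subtreeAt q = some s ∧
      m ≤ s.numLeaves ∧ a + 1 - 2 * m ≤ t.pathOffset q ∧ t.pathOffset q < a + ℓ := by
    intro q hq
    obtain ⟨hanc, hlen⟩ := Finset.mem_filter.mp hq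
    obtain ⟨p, hp, hqp⟩ := mem_ancestors.mp hanc
    obtain ⟨x, hx⟩ := hleaf p hp
    obtain ⟨s, hs, hoff⟩ := exists_subtreeAt_of_prefix hqp hx
    have := hsize q s hlen hs
    have := hwin p hp
    exact ⟨s, hs, by omega, by omega, by omega⟩
  have := card_le_of_separated _ t.pathOffset hm (lo := a + 1 - 2 * m) (hi := a + ℓ)
    (fun q hq ↦ by obtain ⟨s, -, -, h⟩ := hnode q hq; exact h)
    (fun q₁ hq₁ q₂ hq₂ hne ↦ by
      obtain ⟨s₁, hs₁, hm₁, -⟩ := hnode q₁ hq₁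
      obtain ⟨s₂, hs₂, hm₂, -⟩ := hnode q₂ hq₂
      have hlen : q₁.length = q₂.length := by
        rw [(Finset.mem_filter.mp hq₁).2, (Finset.mem_filter.mp hq₂).2]
      have := pathOffset_separated hlen hne hs₁ hs₂
      omega)
  calc _ ≤ (a + ℓ - (a + 1 - 2 * m)) / m + 1 := this
    _ ≤ (ℓ + 2 * m) / m + 1 := by gcongr; omega
    _ = ℓ / m + 3 := by rw [Nat.add_mul_div_right _ _ hm]

end BTree

/-- In a balanced strictly binary tree with `u` leaves, the number of distinct ancestors of
any `r` leaves all chosen from within a contiguous block of `ℓ` consecutive leaves is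
`O(log u + r·log₂(ℓ/r))` (with the convention `log x = max(1, log x)` inside the bound). -/
theorem ancestors_of_leaves_in_window :
    ∃ c : ℕ, 0 < c ∧
      ∀ (t : BTree) (P : Finset (List Bool)) (a ℓ : ℕ),
        t.balanced →
        (∀ p ∈ P, ∃ x, t.subtreeAt p = some (BTree.leaf x)) →
        (∀ p ∈ P, a ≤ t.pathOffset p ∧ t.pathOffset p < a + ℓ) →
        ℓ ≤ t.numLeaves →
        (P.biUnion fun p => p.inits.toFinset).card ≤
          c * (Nat.clog 2 t.numLeaves + P.card * max 1 (Nat.log 2 (ℓ / P.card))) := by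
  refine ⟨6, by norm_num, fun t P a ℓ hbal hleaf hwin _ ↦ ?_⟩
  rcases P.eq_empty_or_nonempty with rfl | hP
  · simp
  set D := Nat.clog 2 t.numLeaves
  have hdepth : ∀ q ∈ BTree.ancestors P, q.length ∈ Finset.range (D + 1) := fun q hq ↦ by
    obtain ⟨p, hp, hqp⟩ := BTree.mem_ancestors.mp hq
    obtain ⟨x, hx⟩ := hleaf p hp
    exact Finset.mem_range_succ_iff.mpr (hqp.length_le.trans (hbal.length_le_clog hx))
  change (BTree.ancestors P).card ≤ _
  rw [Finset.card_eq_sum_card_fiberwise hdepth]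
  refine sum_le_of_level_bounds _ hP.card_pos (BTree.card_ancestors_depth_le_card P)
    fun d hd ↦ BTree.card_ancestors_depth_le_of_window (by positivity) hleaf hwin ?_
  rintro q s rfl hs
  exact hbal.numLeaves_subtreeAt_mem_Icc hs hd
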